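/- arXiv:1607.06010 — 8 statements merged into one kernel-verified Lean document; each statement's English description precedes it below -/
import Mathlib

section
/- Let λ_0,…,λ_r > 0 with Σ λ_j = 1, and let α(0),…,α(r) ∈ ℝ^n be affinely independent points with β = Σ λ_j α(j). Let f(x) = Σ_{j=0}^r c_j x^{α(j)} + c_β x^β with c_j > 0, where all α(j) lie in (2ℕ)^n. Define the circuit number Θ_f = Π_{j=0}^r (c_j/λ_j)^{λ_j}. If |c_β| ≤ Θ_f, then f(x) ≥ 0 for all x ∈ ℝ^n. -/
/-- Sufficiency of the circuit number criterion for nonnegativity of a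
circuit polynomial. -/
theorem circuit_number_implies_nonneg
    (n r : ℕ)
    (lam : Fin (r + 1) → ℝ) (hlam : ∀ j, 0 < lam j)
    (hlamsum : ∑ j, lam j = 1)
    (α : Fin (r + 1) → Fin n → ℕ)
    (heven : ∀ j i, Even (α j i))
    (haff : AffineIndependent ℝ (fun j => (fun i => (α j i : ℝ)) : Fin (r + 1) → Fin n → ℝ))
    (β : Fin n → ℕ)
    (hβ : ∀ i, (β i : ℝ) = ∑ j, lam j * (α j i : ℝ))
    (c : Fin (r + 1) → ℝ) (hc : ∀ j, 0 < c j)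
    (cβ : ℝ)
    (Θ : ℝ) (hΘ : Θ = ∏ j, (c j / lam j) ^ (lam j))
    (hbound : |cβ| ≤ Θ) :
    ∀ x : Fin n → ℝ,
      0 ≤ (∑ j, c j * ∏ i, x i ^ (α j i)) + cβ * ∏ i, x i ^ (β i) := by
  intro x
  set y : Fin (r + 1) → ℝ := fun j => ∏ i, |x i| ^ (α j i) with hy_def
  have hy : ∀ j, 0 ≤ y j := fun j =>
    Finset.prod_nonneg fun i _ => pow_nonneg (abs_nonneg _) _
  have hxy : ∀ j, ∏ i, x i ^ (α j i) = y j := by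
    intro j
    refine Finset.prod_congr rfl fun i _ => ?_
    exact ((heven j i).pow_abs (x i)).symm
  have hΘnn : 0 ≤ Θ := le_trans (abs_nonneg _) hbound
  -- main claim
  have key : Θ * ∏ i, |x i| ^ (β i) ≤ ∑ j, c j * y j := by
    by_cases hcase : ∃ i, x i = 0 ∧ β i ≠ 0
    · obtain ⟨i, hxi, hβi⟩ := hcase
      have : ∏ i, |x i| ^ (β i) = 0 := by
        apply Finset.prod_eq_zero (Finset.mem_univ i)
        rw [hxi, abs_zero, zero_pow hβi]
      rw [this, mul_zero]
      exact Finset.sum_nonneg fun j _ => mul_nonneg (hc j).le (hy j)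
    · push_neg at hcase
      -- all exponents vanish where x vanishes
      have hαzero : ∀ i, x i = 0 → ∀ j, α j i = 0 := by
        intro i hxi j
        have hβi := hcase i hxi
        have h0 : (0 : ℝ) = ∑ j, lam j * (α j i : ℝ) := by
          rw [← hβ i, hβi]; simp
        have hterm : ∀ k ∈ Finset.univ, (0 : ℝ) ≤ lam k * (α k i : ℝ) :=
          fun k _ => mul_nonneg (hlam k).le (Nat.cast_nonneg _)
        have := (Finset.sum_eq_zero_iff_of_nonneg hterm).mp h0.symm j (Finset.mem_univ j)
        have : (α j i : ℝ) = 0 := by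
          rcases mul_eq_zero.mp this with h | h
          · exact absurd h (hlam j).ne'
          · exact h
        exact_mod_cast this
      set t : Fin n → ℝ := fun i => if x i = 0 then 1 else |x i| with ht_def
      have htpos : ∀ i, 0 < t i := by
        intro i
        by_cases h : x i = 0 <;> simp [ht_def, h, abs_pos]
      have hyt : ∀ j, y j = ∏ i, t i ^ (α j i) := by
        intro j
        refine Finset.prod_congr rfl fun i _ => ?_
        by_cases h : x i = 0
        · rw [hαzero i h j]; simp
        · simp [ht_def, h]
      have hβt : ∏ i, |x i| ^ (β i) = ∏ i, t i ^ (β i) := by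
        refine Finset.prod_congr rfl fun i _ => ?_
        by_cases h : x i = 0
        · have := hcase i h; rw [this]; simp
        · simp [ht_def, h]
      -- AM-GM
      set z : Fin (r + 1) → ℝ := fun j => (c j / lam j) * y j with hz_def
      have hznn : ∀ j, 0 ≤ z j := fun j =>
        mul_nonneg (div_nonneg (hc j).le (hlam j).le) (hy j)
      have hamgm : ∏ j, z j ^ (lam j) ≤ ∑ j, lam j * z j :=
        Real.geom_mean_le_arith_mean_weighted Finset.univ lam z
          (fun j _ => (hlam j).le) hlamsum (fun j _ => hznn j)
      have hsum : ∑ j, lam j * z j = ∑ j, c j * y j := by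
        refine Finset.sum_congr rfl fun j _ => ?_
        show lam j * (c j / lam j * y j) = c j * y j
        have hne := (hlam j).ne'
        field_simp
      have hprod : ∏ j, z j ^ (lam j) = Θ * ∏ j, y j ^ (lam j) := by
        rw [hΘ, ← Finset.prod_mul_distrib]
        refine Finset.prod_congr rfl fun j _ => ?_
        rw [hz_def, Real.mul_rpow (div_nonneg (hc j).le (hlam j).le) (hy j)]
      have hyβ : ∏ j, y j ^ (lam j) = ∏ i, t i ^ (β i) := by
        have step1 : ∀ j, y j ^ (lam j) = ∏ i, t i ^ ((α j i : ℝ) * lam j) := by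
          intro j
          rw [hyt j]
          rw [← Real.finset_prod_rpow Finset.univ _ (fun i _ => pow_nonneg (htpos i).le _)]
          refine Finset.prod_congr rfl fun i _ => ?_
          rw [← Real.rpow_natCast (t i) (α j i), ← Real.rpow_mul (htpos i).le]
        calc ∏ j, y j ^ (lam j) = ∏ j, ∏ i, t i ^ ((α j i : ℝ) * lam j) := by
              exact Finset.prod_congr rfl fun j _ => step1 j
          _ = ∏ i, ∏ j, t i ^ ((α j i : ℝ) * lam j) := Finset.prod_comm
          _ = ∏ i, t i ^ (β i) := by
              refine Finset.prod_congr rfl fun i _ => ?_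
              rw [← Real.rpow_sum_of_pos (htpos i)]
              have : ∑ j, (α j i : ℝ) * lam j = (β i : ℝ) := by
                rw [hβ i]
                exact Finset.sum_congr rfl fun j _ => mul_comm _ _
              rw [this, Real.rpow_natCast]
      calc Θ * ∏ i, |x i| ^ (β i) = ∏ j, z j ^ (lam j) := by
            rw [hprod, hyβ, hβt]
        _ ≤ ∑ j, lam j * z j := hamgm
        _ = ∑ j, c j * y j := hsum
  -- conclude
  have habs : |∏ i, x i ^ (β i)| = ∏ i, |x i| ^ (β i) := by
    rw [Finset.abs_prod]
    exact Finset.prod_congr rfl fun i _ => abs_pow _ _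
  have h1 : |cβ * ∏ i, x i ^ (β i)| ≤ ∑ j, c j * y j := by
    rw [abs_mul, habs]
    calc |cβ| * ∏ i, |x i| ^ (β i)
        ≤ Θ * ∏ i, |x i| ^ (β i) := by
          apply mul_le_mul_of_nonneg_right hbound
          exact Finset.prod_nonneg fun i _ => pow_nonneg (abs_nonneg _) _
      _ ≤ ∑ j, c j * y j := key
  have h2 : -(∑ j, c j * y j) ≤ cβ * ∏ i, x i ^ (β i) := by
    have := neg_abs_le (cβ * ∏ i, x i ^ (β i))
    linarith
  have h3 : (∑ j, c j * ∏ i, x i ^ (α j i)) = ∑ j, c j * y j := by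
    exact Finset.sum_congr rfl fun j _ => by rw [hxy j]
  linarith
end

section
/- Let f(x) = Σ_{j=0}^r c_j x^{α(j)} + c_β x^β be a circuit polynomial with α(j) ∈ (2ℕ)^n affinely independent, c_j > 0, β = Σ λ_j α(j) with λ_j > 0, Σ λ_j = 1, and β ∉ (2ℕ)^n. If f(x) ≥ 0 for all x ∈ ℝ^n, then |c_β| ≤ Θ_f where Θ_f = Π_{j=0}^r (c_j/λ_j)^{λ_j}. -/
open Matrix

lemma exists_dotProduct_eq {ι m : Type*} [Fintype ι] [DecidableEq ι] [Fintype m]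
    (v : ι → m → ℝ) (hv : LinearIndependent ℝ v) (d : ι → ℝ) :
    ∃ z : m → ℝ, ∀ j, ∑ i, v j i * z i = d j := by
  classical
  let A : Matrix ι m ℝ := Matrix.of v
  have hG : Function.Injective (A * Aᵀ).mulVec := by
    have h0 : ∀ a, (A * Aᵀ).mulVec a = 0 → a = 0 := by
      intro a ha
      have hw : Matrix.vecMul a A ⬝ᵥ Matrix.vecMul a A = 0 := by
        have : a ⬝ᵥ (A * Aᵀ).mulVec a = 0 := by rw [ha]; simp
        rwa [← Matrix.mulVec_mulVec, Matrix.dotProduct_mulVec, Matrix.mulVec_transpose] at this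
      have hw0 : Matrix.vecMul a A = 0 := dotProduct_self_eq_zero.mp hw
      have := (Fintype.linearIndependent_iff.mp hv) a ?_
      · funext j; exact this j
      · funext i
        have := congrFun hw0 i
        simpa [Matrix.vecMul, dotProduct, A] using this
    intro a b hab
    have : (A * Aᵀ).mulVec (a - b) = 0 := by
      rw [Matrix.mulVec_sub, hab, sub_self]
    exact sub_eq_zero.mp (h0 _ this)
  have hU : IsUnit (A * Aᵀ) := Matrix.mulVec_injective_iff_isUnit.mp hG
  obtain ⟨a, ha⟩ := (Matrix.mulVec_surjective_iff_isUnit.mpr hU) d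
  refine ⟨Aᵀ.mulVec a, fun j => ?_⟩
  have : (A.mulVec (Aᵀ.mulVec a)) j = d j := by
    rw [Matrix.mulVec_mulVec, ha]
  simpa [Matrix.mulVec, dotProduct, A] using this

/-- Necessity of the circuit number criterion: if a circuit polynomial whose
inner exponent `β` is not even is globally nonnegative, then `|c_β| ≤ Θ_f`. -/
theorem nonneg_circuit_implies_circuit_number_bound
    (n r : ℕ)
    (lam : Fin (r + 1) → ℝ) (hlam : ∀ j, 0 < lam j)
    (hlamsum : ∑ j, lam j = 1)
    (α : Fin (r + 1) → Fin n → ℕ)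
    (heven : ∀ j i, Even (α j i))
    (haff : AffineIndependent ℝ (fun j => (fun i => (α j i : ℝ)) : Fin (r + 1) → Fin n → ℝ))
    (β : Fin n → ℕ)
    (hβ : ∀ i, (β i : ℝ) = ∑ j, lam j * (α j i : ℝ))
    (hβodd : ¬ (∀ i, Even (β i)))
    (c : Fin (r + 1) → ℝ) (hc : ∀ j, 0 < c j)
    (cβ : ℝ)
    (Θ : ℝ) (hΘ : Θ = ∏ j, (c j / lam j) ^ (lam j))
    (hnonneg : ∀ x : Fin n → ℝ,
      0 ≤ (∑ j, c j * ∏ i, x i ^ (α j i)) + cβ * ∏ i, x i ^ (β i)) :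
    |cβ| ≤ Θ := by
  classical
  push_neg at hβodd
  obtain ⟨i₀, hi₀⟩ := hβodd
  have hodd : Odd (β i₀) := Nat.not_even_iff_odd.mp hi₀
  -- Step B: key inequality for positive vectors
  have key : ∀ y : Fin n → ℝ, (∀ i, 0 < y i) →
      |cβ| * ∏ i, y i ^ β i ≤ ∑ j, c j * ∏ i, y i ^ α j i := by
    intro y hy
    set x : Fin n → ℝ := Function.update y i₀ (-(y i₀)) with hx
    have hxa : ∀ j, (∏ i, x i ^ α j i) = ∏ i, y i ^ α j i := by
      intro j
      refine Finset.prod_congr rfl fun i _ => ?_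
      by_cases h : i = i₀
      · subst h; rw [hx, Function.update_self, (heven j i).neg_pow]
      · rw [hx, Function.update_of_ne h]
    have hxb : (∏ i, x i ^ β i) = -∏ i, y i ^ β i := by
      have h1 : (∏ i, x i ^ β i)
          = ∏ i, ((if i = i₀ then (-1 : ℝ) else 1) * y i ^ β i) := by
        refine Finset.prod_congr rfl fun i _ => ?_
        by_cases h : i = i₀
        · subst h; rw [hx, Function.update_self, hodd.neg_pow]; simp
        · rw [hx, Function.update_of_ne h]; simp [h]
      rw [h1, Finset.prod_mul_distrib, Finset.prod_ite_eq' Finset.univ i₀ (fun _ => (-1 : ℝ))]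
      simp
    have h2 := hnonneg y
    have h3 := hnonneg x
    rw [show (∑ j, c j * ∏ i, x i ^ α j i) = ∑ j, c j * ∏ i, y i ^ α j i from
      Finset.sum_congr rfl fun j _ => by rw [hxa], hxb] at h3
    have habs : |cβ * ∏ i, y i ^ β i| ≤ ∑ j, c j * ∏ i, y i ^ α j i := by
      rw [abs_le]; constructor <;> nlinarith
    rw [abs_mul] at habs
    have hP : 0 < ∏ i, y i ^ β i := Finset.prod_pos fun i _ => pow_pos (hy i) _
    calc |cβ| * ∏ i, y i ^ β i = |cβ| * |∏ i, y i ^ β i| := by rw [abs_of_pos hP]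
      _ ≤ _ := habs
  -- Step C: choose the optimal y
  have hli : LinearIndependent ℝ
      (fun j : {x : Fin (r + 1) // x ≠ 0} =>
        (fun i => (α j i : ℝ)) - (fun i => (α 0 i : ℝ))) := by
    have := (affineIndependent_iff_linearIndependent_vsub ℝ
      (fun j => (fun i => (α j i : ℝ)) : Fin (r + 1) → Fin n → ℝ) 0).mp haff
    simpa [vsub_eq_sub] using this
  set g : Fin (r + 1) → ℝ := fun j => Real.log (lam j / c j) with hg
  obtain ⟨z, hz⟩ := exists_dotProduct_eq
    (fun j : {x : Fin (r + 1) // x ≠ 0} => (fun i => (α j i : ℝ)) - (fun i => (α 0 i : ℝ)))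
    hli (fun j => g j - g 0)
  set y : Fin n → ℝ := fun i => Real.exp (z i) with hy
  have hypos : ∀ i, 0 < y i := fun i => Real.exp_pos _
  set A : Fin (r + 1) → ℝ := fun j => ∑ i, (α j i : ℝ) * z i with hA
  set K : ℝ := A 0 - g 0 with hK
  have hAK : ∀ j, A j = g j + K := by
    intro j
    by_cases h : j = 0
    · subst h; rw [hK]; ring
    · have h1 := hz ⟨j, h⟩
      simp only [Pi.sub_apply] at h1
      have h2 : A j - A 0 = g j - g 0 := by
        rw [hA]; simp only
        rw [← Finset.sum_sub_distrib, ← h1]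
        exact Finset.sum_congr rfl fun i _ => by ring
      rw [hK]; linarith
  have hya : ∀ j, (∏ i, y i ^ α j i) = Real.exp (A j) := by
    intro j
    rw [hA]; simp only
    rw [Real.exp_sum]
    exact Finset.prod_congr rfl fun i _ => by
      rw [hy]; simp only; exact (Real.exp_nat_mul _ _).symm
  have hS : (∑ j, c j * ∏ i, y i ^ α j i) = Real.exp K := by
    have h1 : ∀ j, c j * ∏ i, y i ^ α j i = lam j * Real.exp K := by
      intro j
      rw [hya j, hAK j, Real.exp_add, hg]
      simp only
      rw [Real.exp_log (div_pos (hlam j) (hc j))]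
      field_simp
      exact mul_div_cancel_left₀ _ (hc j).ne'
    rw [Finset.sum_congr rfl fun j _ => h1 j, ← Finset.sum_mul, hlamsum, one_mul]
  have hB : (∏ i, y i ^ β i) = Real.exp ((∑ j, lam j * g j) + K) := by
    have h1 : (∏ i, y i ^ β i) = Real.exp (∑ i, (β i : ℝ) * z i) := by
      rw [Real.exp_sum]
      exact Finset.prod_congr rfl fun i _ => by
        rw [hy]; simp only; exact (Real.exp_nat_mul _ _).symm
    rw [h1]
    congr 1
    have h2 : (∑ i, (β i : ℝ) * z i) = ∑ j, lam j * A j := by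
      rw [hA]; simp only
      rw [Finset.sum_congr rfl fun i (_ : i ∈ Finset.univ) => by rw [hβ i, Finset.sum_mul]]
      rw [Finset.sum_comm]
      exact Finset.sum_congr rfl fun j _ => by
        rw [Finset.mul_sum]
        exact Finset.sum_congr rfl fun i _ => by ring
    rw [h2, Finset.sum_congr rfl fun j (_ : j ∈ Finset.univ) => by rw [hAK j]]
    rw [show (∑ j, lam j * (g j + K)) = (∑ j, lam j * g j) + (∑ j, lam j) * K by
      rw [Finset.sum_mul, ← Finset.sum_add_distrib]
      exact Finset.sum_congr rfl fun j _ => by ring]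
    rw [hlamsum]; ring
  have hΘexp : Θ = Real.exp (-(∑ j, lam j * g j)) := by
    rw [hΘ]
    rw [show (-(∑ j, lam j * g j)) = ∑ j, lam j * Real.log (c j / lam j) by
      rw [← Finset.sum_neg_distrib]
      refine Finset.sum_congr rfl fun j _ => ?_
      have hlog : Real.log (c j / lam j) = - Real.log (lam j / c j) := by
        rw [← Real.log_inv, inv_div]
      rw [hg]; simp only; rw [hlog]; ring]
    rw [Real.exp_sum]
    refine Finset.prod_congr rfl fun j _ => ?_
    rw [Real.rpow_def_of_pos (div_pos (hc j) (hlam j)), mul_comm]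
  -- conclude
  have hk := key y hypos
  rw [hS, hB] at hk
  rw [hΘexp]
  have hfin : Real.exp (-(∑ j, lam j * g j)) * Real.exp ((∑ j, lam j * g j) + K)
      = Real.exp K := by
    rw [← Real.exp_add]; congr 1; ring
  nlinarith [Real.exp_pos ((∑ j, lam j * g j) + K), Real.exp_pos (-(∑ j, lam j * g j))]
end

section
/- For d ∈ ℕ, d ≥ 2, the set S_d = {(a,b) ∈ ℝ² : x^{2d} + a x² + b ≥ 0 for all x ∈ ℝ} satisfies S_d = {(a,b) ∈ ℝ × ℝ_{≥0} : a + d^{1/d} · (d·b/(d−1))^{(d−1)/d} ≥ 0}. -/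
/-!
Substituting `t = x²`, the question is when `t ^ d + a t + b ≥ 0` on `t ≥ 0`. Weighted AM–GM with
weights `1/d` and `(d-1)/d` applied to `d t ^ d` and `d b / (d-1)` gives `Θ t ≤ t ^ d + b`, where
`Θ` is the circuit number; this proves sufficiency. Equality holds at `t = (b / (d-1)) ^ (1/d)`,
which gives necessity when `b > 0`; for `b = 0` let `t → 0⁺` in `t ^ (d-1) + a ≥ 0`.
-/

open Real Filter Topology

/-- The circuit number `∏ (c_j / λ_j) ^ λ_j` of `x ^ (2d) + a x² + b`: writing the inner exponent
as `2 = (1/d)·(2d) + ((d-1)/d)·0` gives the weights `λ = (1/d, (d-1)/d)` of the outer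
coefficients `c = (1, b)`. -/
noncomputable def circuitNumber (d : ℕ) (b : ℝ) : ℝ :=
  (d : ℝ) ^ ((1 : ℝ) / d) * ((d : ℝ) * b / ((d : ℝ) - 1)) ^ (((d : ℝ) - 1) / d)

lemma forall_sq_iff_forall_nonneg {P : ℝ → Prop} : (∀ x : ℝ, P (x ^ 2)) ↔ ∀ t, 0 ≤ t → P t :=
  ⟨fun h t ht => sq_sqrt ht ▸ h √t, fun h x => h _ (sq_nonneg x)⟩

section

variable {d : ℕ}

lemma circuitNumber_zero (hd : 2 ≤ d) : circuitNumber d 0 = 0 := by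
  have hd' : (2 : ℝ) ≤ d := by exact_mod_cast hd
  rw [circuitNumber, mul_zero, zero_div, zero_rpow (div_pos (by linarith) (by linarith)).ne',
    mul_zero]

lemma circuitNumber_mul_le (hd : 2 ≤ d) {t b : ℝ} (ht : 0 ≤ t) (hb : 0 ≤ b) :
    circuitNumber d b * t ≤ t ^ d + b := by
  have hd' : (2 : ℝ) ≤ d := by exact_mod_cast hd
  have hd1 : (d : ℝ) - 1 ≠ 0 := by linarith
  have amgm := geom_mean_le_arith_mean2_weighted (w₁ := 1 / d) (w₂ := (d - 1) / d)
    (p₁ := d * t ^ d) (p₂ := d * b / (d - 1)) (by positivity)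
    (div_nonneg (by linarith) (by positivity)) (by positivity)
    (div_nonneg (by positivity) (by linarith)) (by field_simp; ring)
  have root : (d * t ^ d : ℝ) ^ (1 / d : ℝ) = (d : ℝ) ^ (1 / d : ℝ) * t := by
    rw [mul_rpow (by positivity) (by positivity), ← rpow_natCast t d, ← rpow_mul ht,
      mul_one_div_cancel (by positivity), rpow_one]
  have mean : 1 / d * (d * t ^ d) + (d - 1) / d * (d * b / (d - 1)) = t ^ d + b := by
    field_simp
  rw [root, mean] at amgm
  rw [circuitNumber]
  linarith

lemma exists_circuitNumber_mul_eq (hd : 2 ≤ d) {b : ℝ} (hb : 0 < b) :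
    ∃ t, 0 < t ∧ circuitNumber d b * t = t ^ d + b := by
  have hd' : (2 : ℝ) ≤ d := by exact_mod_cast hd
  have hd1 : (d : ℝ) - 1 ≠ 0 := by linarith
  set s := b / (d - 1) with hs
  have hs0 : 0 < s := div_pos hb (by linarith)
  have hb_eq : b = (d - 1) * s := by rw [hs]; field_simp
  refine ⟨s ^ (1 / d : ℝ), rpow_pos_of_pos hs0 _, ?_⟩
  have hdb : (d : ℝ) * b / (d - 1) = d * s := by rw [hb_eq]; field_simp
  have hpow : (s ^ (1 / d : ℝ)) ^ d = s := by
    rw [← rpow_natCast, ← rpow_mul hs0.le, one_div_mul_cancel (by positivity), rpow_one]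
  calc circuitNumber d b * s ^ (1 / d : ℝ)
      = (d : ℝ) ^ (1 / d + (d - 1) / d : ℝ) * s ^ ((d - 1) / d + 1 / d : ℝ) := by
        rw [circuitNumber, hdb, mul_rpow (by positivity) hs0.le, rpow_add (by positivity),
          rpow_add hs0]
        ring
    _ = d * s := by
        rw [← add_div, ← add_div, add_sub_cancel, sub_add_cancel, div_self (by positivity),
          rpow_one, rpow_one]
    _ = (s ^ (1 / d : ℝ)) ^ d + b := by rw [hpow, hb_eq]; ring

lemma nonneg_of_forall_pow_add_mul_nonneg (hd : 2 ≤ d) {a : ℝ}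
    (h : ∀ t, 0 < t → 0 ≤ t ^ d + a * t) : 0 ≤ a := by
  have lim : Tendsto (fun t : ℝ => t ^ (d - 1) + a) (𝓝[>] 0) (𝓝 a) := by
    have : Continuous fun t : ℝ => t ^ (d - 1) + a := by fun_prop
    simpa [zero_pow (by omega : d - 1 ≠ 0)] using (this.tendsto 0).mono_left nhdsWithin_le_nhds
  refine ge_of_tendsto lim (eventually_nhdsWithin_of_forall fun t (ht : 0 < t) => ?_)
  have hpos := h t ht
  rw [show t ^ d = t ^ (d - 1) * t by rw [← pow_succ]; congr; omega, ← add_mul] at hpos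
  exact nonneg_of_mul_nonneg_left hpos ht

theorem forall_nonneg_pow_add_mul_add_nonneg_iff (hd : 2 ≤ d) {a b : ℝ} :
    (∀ t, 0 ≤ t → 0 ≤ t ^ d + a * t + b) ↔ 0 ≤ b ∧ 0 ≤ a + circuitNumber d b := by
  constructor
  · intro h
    have hb : 0 ≤ b := by simpa [zero_pow (by omega : d ≠ 0)] using h 0 le_rfl
    refine ⟨hb, ?_⟩
    rcases hb.eq_or_lt with rfl | hb
    · rw [circuitNumber_zero hd, add_zero]
      exact nonneg_of_forall_pow_add_mul_nonneg hd fun t ht => by simpa using h t ht.le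
    · obtain ⟨t, ht, heq⟩ := exists_circuitNumber_mul_eq hd hb
      nlinarith [h t ht.le]
  · rintro ⟨hb, hab⟩ t ht
    nlinarith [circuitNumber_mul_le hd ht hb, mul_nonneg hab ht]

end

/-- Explicit description of the set
`S_d = {(a,b) : x^{2d} + a x² + b ≥ 0 for all x}` via the circuit number criterion. -/
theorem Sd_explicit_description (d : ℕ) (hd : 2 ≤ d) :
    {p : ℝ × ℝ | ∀ x : ℝ, 0 ≤ x ^ (2 * d) + p.1 * x ^ 2 + p.2}
      =
    {p : ℝ × ℝ | 0 ≤ p.2 ∧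
      0 ≤ p.1 + (d : ℝ) ^ ((1 : ℝ) / d) *
            ((d : ℝ) * p.2 / ((d : ℝ) - 1)) ^ (((d : ℝ) - 1) / d)} := by
  ext ⟨a, b⟩
  simp only [Set.mem_ofPred_eq, pow_mul]
  rw [forall_sq_iff_forall_nonneg (P := fun t => 0 ≤ t ^ d + a * t + b),
    forall_nonneg_pow_add_mul_add_nonneg_iff hd, circuitNumber]
end

section
/- Let c_0,…,c_r > 0, let λ_0,…,λ_r > 0 with Σ λ_j = 1, and let b > 0. Then b ≤ Π_{j=0}^r (c_j/λ_j)^{λ_j} if and only if there exist ν_0,…,ν_r ≥ 0 and δ_0,…,δ_r ∈ ℝ such that ν_j = b·λ_j for all j, ν_j · log(ν_j/c_j) ≤ δ_j for all j, and Σ_{j=0}^r δ_j ≤ 0. -/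
/-! Taking logarithms, `∑ j, b λ_j log (b λ_j / c_j) = b · log (b / ∏ j, (c_j / λ_j) ^ λ_j)`
because `∑ λ_j = 1`; since `b > 0` this sum is nonpositive exactly when `b` is at most the circuit
number. The variables `δ_j` are then just slack: they exist iff the sum of their lower bounds is
nonpositive. -/

open Finset Real

theorem exists_le_and_sum_nonpos_iff {ι : Type*} [Fintype ι] (f : ι → ℝ) :
    (∃ δ : ι → ℝ, (∀ j, f j ≤ δ j) ∧ ∑ j, δ j ≤ 0) ↔ ∑ j, f j ≤ 0 :=
  ⟨fun ⟨_, hfδ, hδ⟩ => (sum_le_sum fun j _ => hfδ j).trans hδ,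
    fun h => ⟨f, fun _ => le_rfl, h⟩⟩

section CircuitNumber

variable {ι : Type*} [Fintype ι] {c lam : ι → ℝ}

theorem Real.log_prod_rpow_div (hc : ∀ j, 0 < c j) (hlam : ∀ j, 0 < lam j) :
    log (∏ j, (c j / lam j) ^ lam j) = ∑ j, lam j * log (c j / lam j) := by
  rw [log_prod fun j _ => (rpow_pos_of_pos (div_pos (hc j) (hlam j)) _).ne']
  exact sum_congr rfl fun j _ => log_rpow (div_pos (hc j) (hlam j)) _

theorem Real.sum_mul_log_div_eq_mul_log_div_prod_rpow (hc : ∀ j, 0 < c j)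
    (hlam : ∀ j, 0 < lam j) (hlamsum : ∑ j, lam j = 1) {b : ℝ} (hb : 0 < b) :
    ∑ j, b * lam j * log (b * lam j / c j) = b * log (b / ∏ j, (c j / lam j) ^ lam j) := by
  have hterm : ∀ j, b * lam j * log (b * lam j / c j)
      = b * (lam j * log b) - b * (lam j * log (c j / lam j)) := fun j => by
    rw [log_div (mul_pos hb (hlam j)).ne' (hc j).ne', log_mul hb.ne' (hlam j).ne',
      log_div (hc j).ne' (hlam j).ne']
    ring
  rw [sum_congr rfl fun j _ => hterm j, sum_sub_distrib, ← mul_sum, ← mul_sum, ← sum_mul,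
    hlamsum, log_div hb.ne' (prod_pos fun j _ => rpow_pos_of_pos (div_pos (hc j) (hlam j)) _).ne',
    log_prod_rpow_div hc hlam]
  ring

theorem Real.le_prod_rpow_div_iff_sum_mul_log_div_nonpos (hc : ∀ j, 0 < c j)
    (hlam : ∀ j, 0 < lam j) (hlamsum : ∑ j, lam j = 1) {b : ℝ} (hb : 0 < b) :
    b ≤ ∏ j, (c j / lam j) ^ lam j ↔ ∑ j, b * lam j * log (b * lam j / c j) ≤ 0 := by
  have hP : 0 < ∏ j, (c j / lam j) ^ lam j :=
    prod_pos fun j _ => rpow_pos_of_pos (div_pos (hc j) (hlam j)) _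
  rw [sum_mul_log_div_eq_mul_log_div_prod_rpow hc hlam hlamsum hb,
    mul_nonpos_iff_pos_imp_nonpos, log_nonpos_iff (div_pos hb hP).le, div_le_one hP]
  simp [hb, hb.le]

end CircuitNumber

/-- Relative-entropy reformulation of the circuit-number condition. -/
theorem circuit_number_iff_relative_entropy_feasible
    (r : ℕ) (c lam : Fin (r + 1) → ℝ)
    (hc : ∀ j, 0 < c j) (hlam : ∀ j, 0 < lam j)
    (hlamsum : ∑ j, lam j = 1)
    (b : ℝ) (hb : 0 < b) :
    b ≤ ∏ j, (c j / lam j) ^ (lam j)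
      ↔
    ∃ (ν δ : Fin (r + 1) → ℝ),
      (∀ j, 0 ≤ ν j) ∧
      (∀ j, ν j = b * lam j) ∧
      (∀ j, ν j * Real.log (ν j / c j) ≤ δ j) ∧
      (∑ j, δ j ≤ 0) := by
  rw [le_prod_rpow_div_iff_sum_mul_log_div_nonpos hc hlam hlamsum hb,
    ← exists_le_and_sum_nonpos_iff]
  constructor
  · rintro ⟨δ, hδ, hδsum⟩
    exact ⟨fun j => b * lam j, δ, fun j => (mul_pos hb (hlam j)).le, fun _ => rfl, hδ, hδsum⟩
  · rintro ⟨ν, δ, -, hν, hδ, hδsum⟩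
    obtain rfl : ν = fun j => b * lam j := funext hν
    exact ⟨δ, hδ, hδsum⟩
end

section
/- A nonnegative circuit polynomial f(x) = Σ_{j=0}^r c_j x^{α(j)} + c_β x^β with c_β = −Θ_f, β ∈ (2ℕ)^n, and Newton polytope equal to the full simplex Δ_{n,2d} with vertices 0, 2d·e_1, …, 2d·e_n, has exactly 2^n zeros in (ℝ∖{0})^n, namely all points v with |v_i| = (λ_i/c_i)^{1/(2d)} for i = 1,…,n. -/
/-!
Put `z_i = c_i x_i^{2d} / λ_i`. Since `β = 2d λ` is even, `Θ_f x^β = ∏ z_i^{λ_i}`, so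
`f(x) = λ_0 · 1 + ∑ λ_i z_i - ∏ z_i^{λ_i}` is the gap in the weighted AM-GM inequality for the
points `1, z_1, …, z_n` with weights `λ_0, λ_1, …, λ_n`. It vanishes exactly when all these points
coincide, i.e. when `|x_i|^{2d} = λ_i / c_i` for every `i`: two choices of sign per coordinate.
-/

open Finset

/-- AM-GM equality case when one of the points is `1`. -/
lemma prod_rpow_eq_add_sum_mul_iff {ι : Type*} [Fintype ι] {w₀ : ℝ} {w z : ι → ℝ}
    (hw₀ : 0 < w₀) (hw : ∀ i, 0 < w i) (hsum : w₀ + ∑ i, w i = 1) (hz : ∀ i, 0 ≤ z i) :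
    ∏ i, z i ^ w i = w₀ + ∑ i, w i * z i ↔ ∀ i, z i = 1 := by
  let W : Option ι → ℝ := fun o => o.elim w₀ w
  let Z : Option ι → ℝ := fun o => o.elim 1 z
  have hW : ∀ o ∈ univ, 0 < W o := by rintro (_ | i) _ <;> simp [W, hw₀, hw]
  have hWsum : ∑ o, W o = 1 := by simpa [W, Fintype.sum_option] using hsum
  have hZ : ∀ o ∈ univ, 0 ≤ Z o := by rintro (_ | i) _ <;> simp [Z, hz]
  have amgm := Real.geom_mean_eq_arith_mean_weighted_iff_of_pos univ W Z hW hWsum hZ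
  simp only [Fintype.prod_option, Fintype.sum_option, mem_univ, forall_const, W, Z,
    Option.elim_none, Option.elim_some, Real.one_rpow, one_mul, mul_one] at amgm
  rw [amgm]
  constructor
  · exact fun h i => h (some i) none
  · rintro h (_ | i) (_ | j) <;> simp [h]

lemma pow_rpow_eq_pow_of_even {a s : ℝ} {k m : ℕ} (hk : Even k) (hm : Even m)
    (hkm : (m : ℝ) = k * s) : (a ^ k) ^ s = a ^ m := by
  rw [← hk.pow_abs, ← hm.pow_abs, ← Real.rpow_natCast |a| k, ← Real.rpow_mul (abs_nonneg a),
    ← hkm, Real.rpow_natCast]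

lemma pow_eq_iff_abs_eq_rpow_of_even {a y : ℝ} {k : ℕ} (hk : Even k) (hk₀ : k ≠ 0) (hy : 0 ≤ y) :
    a ^ k = y ↔ |a| = y ^ ((1 : ℝ) / k) := by
  rw [← hk.pow_abs, one_div, eq_comm (a := |a|),
    Real.rpow_inv_eq hy (abs_nonneg a) (Nat.cast_ne_zero.mpr hk₀), Real.rpow_natCast, eq_comm]

lemma ncard_abs_eq_pos {ι : Type*} [Fintype ι] {r : ι → ℝ} (hr : ∀ i, 0 < r i) :
    {v : ι → ℝ | ∀ i, |v i| = r i}.ncard = 2 ^ Fintype.card ι := by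
  classical
  have hpi : {v : ι → ℝ | ∀ i, |v i| = r i}
      = ↑(Fintype.piFinset fun i => ({r i, -r i} : Finset ℝ)) := by
    ext v
    simp [abs_eq (hr _).le]
  have hpair : ∀ i, ({r i, -r i} : Finset ℝ).card = 2 := fun i =>
    card_pair (by linarith [hr i] : r i ≠ -r i)
  rw [hpi, Set.ncard_coe_finset, Fintype.card_piFinset]
  simp [hpair]

section Circuit

variable {ι : Type*} [Fintype ι] {d : ℕ} {lam₀ : ℝ} {lam c : ι → ℝ} {β : ι → ℕ}

lemma circuit_eq_amgm_gap (hlam : ∀ i, 0 < lam i) (hc : ∀ i, 0 < c i)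
    (hβeven : ∀ i, Even (β i)) (hβ : ∀ i, (β i : ℝ) = 2 * d * lam i) (x : ι → ℝ) :
    lam₀ + ∑ i, c i * x i ^ (2 * d) - (∏ i, (c i / lam i) ^ lam i) * ∏ i, x i ^ β i
      = lam₀ + ∑ i, lam i * (c i * x i ^ (2 * d) / lam i)
        - ∏ i, (c i * x i ^ (2 * d) / lam i) ^ lam i := by
  congr 1
  · congr 1
    refine sum_congr rfl fun i _ => ?_
    field_simp [(hlam i).ne']
  · rw [← prod_mul_distrib]
    refine prod_congr rfl fun i _ => ?_
    have hexp : (β i : ℝ) = (2 * d : ℕ) * lam i := by rw [hβ i]; push_cast; rfl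
    rw [mul_div_right_comm, Real.mul_rpow (div_pos (hc i) (hlam i)).le
      ((even_two_mul d).pow_nonneg _), pow_rpow_eq_pow_of_even (even_two_mul d) (hβeven i) hexp]

lemma circuit_eq_zero_iff (hd : d ≠ 0) (hlam₀ : 0 < lam₀) (hlam : ∀ i, 0 < lam i)
    (hc : ∀ i, 0 < c i) (hsum : lam₀ + ∑ i, lam i = 1)
    (hβeven : ∀ i, Even (β i)) (hβ : ∀ i, (β i : ℝ) = 2 * d * lam i) (x : ι → ℝ) :
    lam₀ + ∑ i, c i * x i ^ (2 * d) - (∏ i, (c i / lam i) ^ lam i) * ∏ i, x i ^ β i = 0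
      ↔ ∀ i, |x i| = (lam i / c i) ^ ((1 : ℝ) / (2 * d)) := by
  have hz : ∀ i, 0 ≤ c i * x i ^ (2 * d) / lam i := fun i =>
    div_nonneg (mul_nonneg (hc i).le ((even_two_mul d).pow_nonneg _)) (hlam i).le
  rw [circuit_eq_amgm_gap hlam hc hβeven hβ, sub_eq_zero, eq_comm,
    prod_rpow_eq_add_sum_mul_iff hlam₀ hlam hsum hz]
  refine forall_congr' fun i => ?_
  rw [div_eq_one_iff_eq (hlam i).ne', mul_comm (c i), ← eq_div_iff (hc i).ne',
    pow_eq_iff_abs_eq_rpow_of_even (even_two_mul d) (by positivity)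
      (div_pos (hlam i) (hc i)).le]
  push_cast
  rfl

end Circuit

theorem circuit_polynomial_zero_set_general
    (n d : ℕ) (hd : 1 ≤ d)
    (lam0 : ℝ) (lam c : Fin n → ℝ)
    (hlam0 : 0 < lam0) (hlam : ∀ i, 0 < lam i) (hc : ∀ i, 0 < c i)
    (hsum : lam0 + ∑ i, lam i = 1)
    (β : Fin n → ℕ)
    (hβeven : ∀ i, Even (β i))
    (hβ : ∀ i, (β i : ℝ) = 2 * d * lam i)
    (Θ : ℝ) (hΘ : Θ = ∏ i, (c i / lam i) ^ (lam i))
    (f : (Fin n → ℝ) → ℝ)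
    (hf : ∀ x, f x = lam0 + (∑ i, c i * x i ^ (2 * d)) + (-Θ) * ∏ i, x i ^ (β i)) :
    {x : Fin n → ℝ | (∀ i, x i ≠ 0) ∧ f x = 0}
        = {v : Fin n → ℝ | ∀ i, |v i| = (lam i / c i) ^ ((1 : ℝ) / (2 * d))} ∧
    Set.ncard {x : Fin n → ℝ | (∀ i, x i ≠ 0) ∧ f x = 0} = 2 ^ n := by
  have hr : ∀ i, 0 < (lam i / c i) ^ ((1 : ℝ) / (2 * d)) := fun i =>
    Real.rpow_pos_of_pos (div_pos (hlam i) (hc i)) _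
  have hzeros : {x : Fin n → ℝ | (∀ i, x i ≠ 0) ∧ f x = 0}
      = {v : Fin n → ℝ | ∀ i, |v i| = (lam i / c i) ^ ((1 : ℝ) / (2 * d))} := by
    ext x
    have hfx : f x = 0 ↔ ∀ i, |x i| = (lam i / c i) ^ ((1 : ℝ) / (2 * d)) := by
      rw [hf, hΘ, neg_mul, ← sub_eq_add_neg]
      exact circuit_eq_zero_iff (by omega) hlam0 hlam hc hsum hβeven hβ x
    simp only [Set.mem_ofPred_eq, hfx, and_iff_right_iff_imp]
    exact fun hx i => abs_pos.mp ((hx i).symm ▸ hr i)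
  refine ⟨hzeros, ?_⟩
  rw [hzeros, ncard_abs_eq_pos hr, Fintype.card_fin]

/-- A nonnegative circuit polynomial with full simplex Newton polytope
`Δ_{n,2d}` and inner coefficient `−Θ_f` at an even interior exponent has exactly the
`2^n` zeros `v` with `|v_i| = (λ_i/c_i)^{1/(2d)}` in `(ℝ∖{0})^n`. -/
theorem circuit_polynomial_zero_set
    (n d : ℕ) (hn : 1 ≤ n) (hd : 1 ≤ d)
    (lam0 : ℝ) (lam c : Fin n → ℝ)
    (hlam0 : 0 < lam0) (hlam : ∀ i, 0 < lam i) (hc : ∀ i, 0 < c i)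
    (hsum : lam0 + ∑ i, lam i = 1)
    (β : Fin n → ℕ)
    (hβeven : ∀ i, Even (β i)) (hβne : ∀ i, β i ≠ 0)
    (hβ : ∀ i, (β i : ℝ) = 2 * d * lam i)
    (Θ : ℝ) (hΘ : Θ = ∏ i, (c i / lam i) ^ (lam i))
    (f : (Fin n → ℝ) → ℝ)
    (hf : ∀ x, f x = lam0 + (∑ i, c i * x i ^ (2 * d)) + (-Θ) * ∏ i, x i ^ (β i))
    (hnonneg : ∀ x, 0 ≤ f x) :
    {x : Fin n → ℝ | (∀ i, x i ≠ 0) ∧ f x = 0}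
        = {v : Fin n → ℝ | ∀ i, |v i| = (lam i / c i) ^ ((1 : ℝ) / (2 * d))} ∧
    Set.ncard {x : Fin n → ℝ | (∀ i, x i ≠ 0) ∧ f x = 0} = 2 ^ n :=
  circuit_polynomial_zero_set_general n d hd lam0 lam c hlam0 hlam hc hsum β hβeven hβ Θ hΘ f hf
end

section
/- The SONC cone C_{n,2d} is full-dimensional inside the cone P_{n,2d} of nonnegative n-variate polynomials of degree at most 2d: there exists f ∈ C_{n,2d} such that for every g ∈ P_{n,2d} there is ε > 0 with f + ε·g ∈ C_{n,2d}. -/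
/-!
Take `f` to be the sum of all monomials `x^α` with `α` even in `Δ_{n,2d}`. Every exponent
`γ ∈ Δ_{n,2d}` is the midpoint of two even exponents `a, b ∈ Δ_{n,2d}`: round the odd coordinates
of `γ` up and down alternately, so that the degrees of `a` and `b` differ by at most `2`. For
`a ≠ b`, AM-GM makes `c x^a + c x^b + δ x^γ` a nonnegative circuit polynomial whenever
`|δ| ≤ 2c`; for `a = b = γ` it is a monomial. Hence `c f + δ x^γ` is SONC whenever `|δ| ≤ c`, and
splitting `f` into `#supp g + 1` equal parts absorbs every term of `ε g` for small `ε > 0`.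
-/

open MvPolynomial

/-- A circuit polynomial in `n` variables, supported in the scaled standard simplex
`Δ_{n,2d}`. -/
def IsCircuit (n d : ℕ) (p : MvPolynomial (Fin n) ℝ) : Prop :=
  ∃ (r : ℕ) (α : Fin (r + 1) → Fin n → ℕ) (β : Fin n → ℕ)
    (c : Fin (r + 1) → ℝ) (cβ : ℝ) (lam : Fin (r + 1) → ℝ),
    r ≤ n ∧
    (∀ j i, Even (α j i)) ∧
    AffineIndependent ℝ (fun j => (fun i => (α j i : ℝ)) : Fin (r + 1) → Fin n → ℝ) ∧
    (∀ j, 0 < c j) ∧ (∀ j, 0 < lam j) ∧ (∑ j, lam j = 1) ∧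
    (∀ i, (β i : ℝ) = ∑ j, lam j * (α j i : ℝ)) ∧
    (∀ j, ∑ i, α j i ≤ 2 * d) ∧
    p = (∑ j, monomial (Finsupp.equivFunOnFinite.symm (α j)) (c j))
          + monomial (Finsupp.equivFunOnFinite.symm β) cβ

/-- A sum of nonnegative circuit polynomials, all supported in `Δ_{n,2d}`. -/
def IsSONC (n d : ℕ) (p : MvPolynomial (Fin n) ℝ) : Prop :=
  ∃ (k : ℕ) (q : Fin k → MvPolynomial (Fin n) ℝ),
    (∀ i, IsCircuit n d (q i)) ∧
    (∀ i (x : Fin n → ℝ), 0 ≤ eval x (q i)) ∧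
    p = ∑ i, q i

namespace IsSONC

variable {n d : ℕ}

theorem zero : IsSONC n d 0 :=
  ⟨0, fun _ => 0, fun i => i.elim0, fun i => i.elim0, by simp⟩

theorem add {p q : MvPolynomial (Fin n) ℝ} (hp : IsSONC n d p) (hq : IsSONC n d q) :
    IsSONC n d (p + q) := by
  obtain ⟨k, f, hf, hf₀, rfl⟩ := hp
  obtain ⟨l, g, hg, hg₀, rfl⟩ := hq
  refine ⟨k + l, Fin.append f g, Fin.addCases ?_ ?_, Fin.addCases ?_ ?_, ?_⟩ <;>
    simp [hf, hg, hf₀, hg₀, Fin.sum_univ_add]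

theorem sum {ι : Type*} {s : Finset ι} {p : ι → MvPolynomial (Fin n) ℝ}
    (hp : ∀ i ∈ s, IsSONC n d (p i)) : IsSONC n d (∑ i ∈ s, p i) := by
  classical
  induction s using Finset.induction_on with
  | empty => simpa using zero
  | insert a s ha ih =>
    rw [Finset.sum_insert ha]
    exact (hp a (s.mem_insert_self a)).add (ih fun i hi => hp i (Finset.mem_insert_of_mem hi))

theorem of_isCircuit {p : MvPolynomial (Fin n) ℝ} (hp : IsCircuit n d p)
    (hp₀ : ∀ x, 0 ≤ eval x p) : IsSONC n d p :=
  ⟨1, fun _ => p, fun _ => hp, fun _ => hp₀, by simp⟩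

end IsSONC

theorem exists_even_add_eq_two_mul_balanced : ∀ {n : ℕ} (γ : Fin n → ℕ),
    ∃ a b : Fin n → ℕ, (∀ i, Even (a i)) ∧ (∀ i, Even (b i)) ∧ (∀ i, a i + b i = 2 * γ i) ∧
      ∑ i, a i ≤ ∑ i, b i + 2 ∧ ∑ i, b i ≤ ∑ i, a i + 2
  | 0, _ => ⟨0, 0, by simp⟩
  | _ + 1, γ => by
    obtain ⟨a, b, ha, hb, hab, hle, hge⟩ := exists_even_add_eq_two_mul_balanced (Fin.tail γ)
    obtain ⟨x, y, hx, hy, hxy, hle', hge'⟩ : ∃ x y, Even x ∧ Even y ∧ x + y = 2 * γ 0 ∧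
        ∑ i, a i + x ≤ ∑ i, b i + y + 2 ∧ ∑ i, b i + y ≤ ∑ i, a i + x + 2 := by
      obtain ⟨k, hk | hk⟩ := Nat.even_or_odd' (γ 0)
      · exact ⟨2 * k, 2 * k, even_two_mul k, even_two_mul k, by omega, by omega, by omega⟩
      · by_cases hab : ∑ i, a i ≤ ∑ i, b i
        · exact ⟨2 * (k + 1), 2 * k, even_two_mul _, even_two_mul k, by omega, by omega, by omega⟩
        · exact ⟨2 * k, 2 * (k + 1), even_two_mul k, even_two_mul _, by omega, by omega, by omega⟩
    refine ⟨Fin.cons x a, Fin.cons y b, Fin.cases hx ha, Fin.cases hy hb,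
      Fin.cases hxy hab, ?_, ?_⟩ <;>
      simp only [Fin.sum_univ_succ, Fin.cons_zero, Fin.cons_succ] <;> omega

theorem exists_even_add_eq_two_mul_of_sum_le {n d : ℕ} (γ : Fin n →₀ ℕ) (hγ : ∑ i, γ i ≤ 2 * d) :
    ∃ a b : Fin n →₀ ℕ, (∀ i, Even (a i)) ∧ (∀ i, Even (b i)) ∧ (∀ i, a i + b i = 2 * γ i) ∧
      ∑ i, a i ≤ 2 * d ∧ ∑ i, b i ≤ 2 * d := by
  obtain ⟨a, b, ha, hb, hab, hle, hge⟩ := exists_even_add_eq_two_mul_balanced γ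
  have hsum : ∑ i, a i + ∑ i, b i = 2 * ∑ i, γ i := by
    rw [← Finset.sum_add_distrib, Finset.mul_sum]; exact Finset.sum_congr rfl fun i _ => hab i
  obtain ⟨k, hk⟩ : Even (∑ i, a i) := Finset.even_sum _ fun i _ => ha i
  obtain ⟨l, hl⟩ : Even (∑ i, b i) := Finset.even_sum _ fun i _ => hb i
  exact ⟨Finsupp.equivFunOnFinite.symm a, Finsupp.equivFunOnFinite.symm b, ha, hb, hab,
    by simp only [Finsupp.coe_equivFunOnFinite_symm]; omega,
    by simp only [Finsupp.coe_equivFunOnFinite_symm]; omega⟩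

theorem two_mul_abs_le_add_of_sq_eq_mul {p q y : ℝ} (hp : 0 ≤ p) (hq : 0 ≤ q) (hy : y ^ 2 = p * q) :
    2 * |y| ≤ p + q :=
  calc 2 * |y| = |2 * y| := by rw [abs_mul, abs_two]
    _ ≤ p + q := abs_le_of_sq_le_sq (by nlinarith [sq_nonneg (p - q)]) (by positivity)

theorem eval_monomial_eq_mul_prod {n : ℕ} (A : Fin n →₀ ℕ) (t : ℝ) (x : Fin n → ℝ) :
    eval x (monomial A t) = t * ∏ i, x i ^ A i := by
  rw [eval_monomial, Finsupp.prod_fintype _ _ fun i => pow_zero (x i)]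

theorem prod_pow_nonneg_of_even {n : ℕ} {A : Fin n →₀ ℕ} (hA : ∀ i, Even (A i)) (x : Fin n → ℝ) :
    0 ≤ ∏ i, x i ^ A i :=
  Finset.prod_nonneg fun i _ => (hA i).pow_nonneg (x i)

theorem exists_pos_abs_mul_le {ι : Type*} (s : Finset ι) (v : ι → ℝ) {c : ℝ} (hc : 0 < c) :
    ∃ ε > 0, ∀ i ∈ s, |ε * v i| ≤ c := by
  set M := ∑ i ∈ s, |v i|
  have hM : 0 ≤ M := Finset.sum_nonneg fun i _ => abs_nonneg (v i)
  refine ⟨c / (M + 1), by positivity, fun i hi => ?_⟩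
  have hvi : |v i| ≤ M := Finset.single_le_sum (f := fun i => |v i|) (fun j _ => abs_nonneg _) hi
  rw [abs_mul, abs_of_pos (by positivity), div_mul_eq_mul_div, div_le_iff₀ (by positivity)]
  nlinarith

theorem sum_le_totalDegree {σ R : Type*} [Fintype σ] [CommSemiring R] {p : MvPolynomial σ R}
    {γ : σ →₀ ℕ} (hγ : γ ∈ p.support) :
    ∑ i, γ i ≤ p.totalDegree := by
  simpa [Finsupp.sum_fintype] using le_totalDegree hγ

section

variable {n d : ℕ}

theorem isSONC_monomial {A : Fin n →₀ ℕ} {t : ℝ} (hA : ∀ i, Even (A i)) (hAd : ∑ i, A i ≤ 2 * d)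
    (ht : 0 ≤ t) : IsSONC n d (monomial A t) := by
  refine .of_isCircuit ⟨0, fun _ => A, A, fun _ => 1, t - 1, fun _ => 1, n.zero_le, fun _ => hA,
    affineIndependent_of_subsingleton (ι := Fin 1) ℝ _, fun _ => one_pos, fun _ => one_pos,
    by simp, by simp, fun _ => hAd, ?_⟩ fun x => ?_
  · simp
  · rw [eval_monomial_eq_mul_prod]
    exact mul_nonneg ht (prod_pow_nonneg_of_even hA x)

section Binomial

variable {a b γ : Fin n →₀ ℕ} {c δ : ℝ}

theorem isCircuit_binomial (ha : ∀ i, Even (a i)) (hb : ∀ i, Even (b i)) (hab : a ≠ b)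
    (hγ : ∀ i, a i + b i = 2 * γ i) (had : ∑ i, a i ≤ 2 * d) (hbd : ∑ i, b i ≤ 2 * d) (hc : 0 < c) :
    IsCircuit n d (monomial a c + monomial b c + monomial γ δ) := by
  have hn : 1 ≤ n := Nat.one_le_iff_ne_zero.2 (by rintro rfl; exact hab (Subsingleton.elim a b))
  have hvert :
      (fun j i => ((![⇑a, ⇑b] j i : ℕ) : ℝ)) = ![fun i => (a i : ℝ), fun i => (b i : ℝ)] := by
    ext j i; fin_cases j <;> rfl
  refine ⟨1, ![a, b], γ, fun _ => c, δ, fun _ => 1 / 2, hn, ?_, ?_, fun _ => hc,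
    fun _ => by norm_num, by norm_num, fun i => ?_, ?_, ?_⟩
  · intro j; fin_cases j; exacts [ha, hb]
  · rw [hvert]
    exact affineIndependent_of_ne ℝ fun h =>
      hab (Finsupp.ext fun i => by exact_mod_cast congrFun h i)
  · have : (a i : ℝ) + b i = 2 * γ i := by exact_mod_cast hγ i
    rw [Fin.sum_univ_two]
    simp only [Matrix.cons_val_zero, Matrix.cons_val_one]
    linarith
  · intro j; fin_cases j; exacts [had, hbd]
  · simp [Fin.sum_univ_two]

theorem eval_binomial_nonneg (ha : ∀ i, Even (a i)) (hb : ∀ i, Even (b i))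
    (hγ : ∀ i, a i + b i = 2 * γ i) (hδ : |δ| ≤ 2 * c) (x : Fin n → ℝ) :
    0 ≤ eval x (monomial a c + monomial b c + monomial γ δ) := by
  simp only [map_add, eval_monomial_eq_mul_prod]
  set P := ∏ i, x i ^ a i
  set Q := ∏ i, x i ^ b i
  set Y := ∏ i, x i ^ γ i
  have hY : Y ^ 2 = P * Q := by
    simp only [Y, P, Q, ← Finset.prod_pow, ← Finset.prod_mul_distrib, ← pow_mul, ← pow_add, hγ,
      mul_comm]
  have hAMGM := two_mul_abs_le_add_of_sq_eq_mul (prod_pow_nonneg_of_even ha x)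
    (prod_pow_nonneg_of_even hb x) hY
  have hc : 0 ≤ c := by linarith [abs_nonneg δ]
  calc 0 ≤ c * (P + Q) - 2 * c * |Y| := by nlinarith
    _ ≤ c * (P + Q) - |δ| * |Y| := by gcongr
    _ ≤ c * P + c * Q + δ * Y := by nlinarith [neg_abs_le (δ * Y), abs_mul δ Y]

theorem isSONC_binomial (ha : ∀ i, Even (a i)) (hb : ∀ i, Even (b i)) (hab : a ≠ b)
    (hγ : ∀ i, a i + b i = 2 * γ i) (had : ∑ i, a i ≤ 2 * d) (hbd : ∑ i, b i ≤ 2 * d) (hc : 0 < c)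
    (hδ : |δ| ≤ 2 * c) : IsSONC n d (monomial a c + monomial b c + monomial γ δ) :=
  .of_isCircuit (isCircuit_binomial ha hb hab hγ had hbd hc) (eval_binomial_nonneg ha hb hγ hδ)

end Binomial

noncomputable def evenSimplexPoints (n d : ℕ) : Finset (Fin n →₀ ℕ) :=
  {α ∈ Finset.Iic (Finsupp.equivFunOnFinite.symm fun _ => 2 * d) |
    (∀ i, Even (α i)) ∧ ∑ i, α i ≤ 2 * d}

theorem mem_evenSimplexPoints {α : Fin n →₀ ℕ} :
    α ∈ evenSimplexPoints n d ↔ (∀ i, Even (α i)) ∧ ∑ i, α i ≤ 2 * d := by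
  refine Finset.mem_filter.trans (and_iff_right_of_imp fun h => Finset.mem_Iic.2 fun i => ?_)
  exact (Finset.single_le_sum (fun j _ => Nat.zero_le (α j)) (Finset.mem_univ i)).trans h.2

noncomputable def evenSimplexPoly (n d : ℕ) : MvPolynomial (Fin n) ℝ :=
  ∑ α ∈ evenSimplexPoints n d, monomial α 1

theorem C_mul_evenSimplexPoly (c : ℝ) :
    C c * evenSimplexPoly n d = ∑ α ∈ evenSimplexPoints n d, monomial α c := by
  simp only [evenSimplexPoly, Finset.mul_sum, C_mul_monomial, mul_one]

theorem isSONC_sum_monomial {s : Finset (Fin n →₀ ℕ)} (hs : s ⊆ evenSimplexPoints n d) {c : ℝ}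
    (hc : 0 ≤ c) : IsSONC n d (∑ α ∈ s, monomial α c) :=
  .sum fun _ hα => isSONC_monomial (mem_evenSimplexPoints.1 (hs hα)).1
    (mem_evenSimplexPoints.1 (hs hα)).2 hc

theorem isSONC_C_mul_evenSimplexPoly {c : ℝ} (hc : 0 ≤ c) :
    IsSONC n d (C c * evenSimplexPoly n d) := by
  rw [C_mul_evenSimplexPoly]
  exact isSONC_sum_monomial subset_rfl hc

theorem isSONC_C_mul_evenSimplexPoly_add_monomial {γ : Fin n →₀ ℕ} {c δ : ℝ}
    (hγ : ∑ i, γ i ≤ 2 * d) (hc : 0 < c) (hδ : |δ| ≤ c) :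
    IsSONC n d (C c * evenSimplexPoly n d + monomial γ δ) := by
  classical
  obtain ⟨a, b, ha, hb, habγ, had, hbd⟩ := exists_even_add_eq_two_mul_of_sum_le γ hγ
  have haE : a ∈ evenSimplexPoints n d := mem_evenSimplexPoints.2 ⟨ha, had⟩
  have hbE : b ∈ evenSimplexPoints n d := mem_evenSimplexPoints.2 ⟨hb, hbd⟩
  rw [C_mul_evenSimplexPoly]
  by_cases hab : a = b
  · subst hab
    obtain rfl : γ = a := Finsupp.ext fun i => by have := habγ i; omega
    rw [← Finset.add_sum_erase _ _ haE, add_right_comm, ← map_add]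
    exact (isSONC_monomial ha had (by linarith [neg_abs_le δ])).add
      (isSONC_sum_monomial (Finset.erase_subset _ _) hc.le)
  · have hbE' : b ∈ (evenSimplexPoints n d).erase a := Finset.mem_erase.2 ⟨Ne.symm hab, hbE⟩
    rw [← Finset.add_sum_erase _ _ haE, ← Finset.add_sum_erase _ _ hbE', ← add_assoc,
      add_right_comm]
    exact (isSONC_binomial ha hb hab habγ had hbd hc (by linarith)).add
      (isSONC_sum_monomial ((Finset.erase_subset _ _).trans (Finset.erase_subset _ _)) hc.le)

end

theorem sonc_cone_full_dimensional_general (n d : ℕ) :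
    ∃ f : MvPolynomial (Fin n) ℝ, IsSONC n d f ∧
      ∀ g : MvPolynomial (Fin n) ℝ,
        g.totalDegree ≤ 2 * d → (∀ x : Fin n → ℝ, 0 ≤ eval x g) →
        ∃ ε : ℝ, 0 < ε ∧ IsSONC n d (f + C ε * g) := by
  refine ⟨evenSimplexPoly n d, by simpa using isSONC_C_mul_evenSimplexPoly zero_le_one,
    fun g hg _ => ?_⟩
  set m : ℝ := (g.support.card : ℝ)
  set c : ℝ := 1 / (m + 1)
  have hc : 0 < c := by positivity
  have hmc : 0 ≤ 1 - m * c := by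
    rw [sub_nonneg, mul_one_div, div_le_one (by positivity)]; linarith
  obtain ⟨ε, hε, hδ⟩ := exists_pos_abs_mul_le g.support (coeff · g) hc
  refine ⟨ε, hε, ?_⟩
  have hCg : C ε * g = ∑ γ ∈ g.support, monomial γ (ε * coeff γ g) := by
    conv_lhs => rw [← support_sum_monomial_coeff g]
    simp only [Finset.mul_sum, C_mul_monomial]
  have hsplit : evenSimplexPoly n d + C ε * g = C (1 - m * c) * evenSimplexPoly n d +
      ∑ γ ∈ g.support, (C c * evenSimplexPoly n d + monomial γ (ε * coeff γ g)) := by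
    rw [Finset.sum_add_distrib, Finset.sum_const, ← hCg, nsmul_eq_mul, map_sub, map_mul, map_one,
      map_natCast]
    ring
  rw [hsplit]
  exact (isSONC_C_mul_evenSimplexPoly hmc).add <| .sum fun γ hγ =>
    isSONC_C_mul_evenSimplexPoly_add_monomial ((sum_le_totalDegree hγ).trans hg) hc (hδ γ hγ)

/-- The SONC cone `C_{n,2d}` is full-dimensional in the cone of
nonnegative polynomials of degree at most `2d`. -/
theorem sonc_cone_full_dimensional (n d : ℕ) (hn : 1 ≤ n) (hd : 1 ≤ d) :
    ∃ f : MvPolynomial (Fin n) ℝ, IsSONC n d f ∧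
      ∀ g : MvPolynomial (Fin n) ℝ,
        g.totalDegree ≤ 2 * d → (∀ x : Fin n → ℝ, 0 ≤ eval x g) →
        ∃ ε : ℝ, 0 < ε ∧ IsSONC n d (f + C ε * g) :=
  sonc_cone_full_dimensional_general n d
end

section
/- Let P ⊆ ℝ[x_1,…,x_n] be the preprime generated by polynomials g_1,…,g_s, l_1,…,l_{2n} where l_j are the box constraints N ± x_i, and let M = {Σ finite s·H : s is a sum of nonnegative circuit polynomials, H a product of the generators g_i, l_j}. Then M is an Archimedean P-module: M contains 1, is closed under addition, is closed under multiplication by elements of P, and for every f ∈ ℝ[x] there is an integer N' ≥ 1 with N' − f ∈ M. -/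
open MvPolynomial

lemma circuit_const (n : ℕ) (t : ℝ) (ht : 0 ≤ t) : IsCircuit n 0 (C t) := by
  have h0 : (Finsupp.equivFunOnFinite.symm (fun _ : Fin n => (0:ℕ)) : Fin n →₀ ℕ) = 0 := by
    ext a; simp
  haveI : Subsingleton (Fin (0+1)) := inferInstanceAs (Subsingleton (Fin 1))
  refine ⟨0, fun _ _ => 0, fun _ => 0, fun _ => t + 1, -1, fun _ => 1, Nat.zero_le n,
    fun _ _ => Even.zero, affineIndependent_of_subsingleton ℝ _, fun _ => by dsimp; linarith,
    fun _ => one_pos, by simp, fun i => by simp, fun _ => by simp, ?_⟩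
  simp only [h0]
  have hs : (∑ _j : Fin (0+1), (monomial (0 : Fin n →₀ ℕ)) (t+1)) = monomial 0 (t+1) := by simp
  rw [hs, ← C_apply, ← C_apply, ← C_add]
  norm_num

lemma sonc_const (n : ℕ) (t : ℝ) (ht : 0 ≤ t) : IsSONC n 0 (C t) :=
  ⟨1, fun _ => C t, fun _ => circuit_const n t ht, fun _ x => by simp [ht],
    by simp⟩

lemma sonc_zero (n d : ℕ) : IsSONC n d 0 :=
  ⟨0, fun i => i.elim0, fun i => i.elim0, fun i => i.elim0, by simp⟩

lemma sonc_smul {n d : ℕ} {a : ℝ} {p : MvPolynomial (Fin n) ℝ} (ha : 0 ≤ a)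
    (hp : IsSONC n d p) : IsSONC n d (C a * p) := by
  rcases ha.eq_or_lt with h | h
  · rw [← h]; simpa using sonc_zero n d
  obtain ⟨k, q, hc, hnn, rfl⟩ := hp
  refine ⟨k, fun i => C a * q i, fun i => ?_, fun i x => ?_, by rw [Finset.mul_sum]⟩
  · obtain ⟨r, α, β, c, cβ, lam, h1, h2, h3, h4, h5, h6, h7, h8, h9⟩ := hc i
    refine ⟨r, α, β, fun j => a * c j, a * cβ, lam, h1, h2, h3,
      fun j => mul_pos h (h4 j), h5, h6, h7, h8, ?_⟩
    dsimp only
    rw [h9, mul_add, Finset.mul_sum]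
    simp [C_mul_monomial]
  · rw [map_mul, eval_C]
    exact mul_nonneg ha (hnn i x)

/-- The set `M` of finite sums `Σ s·H` (with `s` SONC and `H` a product of
the generators `g_i, l_j`) is an Archimedean module over the preprime generated by the
`g_i` and the box constraints `l_j = N ± x_i`. -/
theorem sonc_module_archimedean
    (n s : ℕ) (g : Fin s → MvPolynomial (Fin n) ℝ) (N : ℝ) (hN : 1 ≤ N)
    (G : (Fin s ⊕ Fin n × Bool) → MvPolynomial (Fin n) ℝ)
    (hG1 : ∀ i, G (Sum.inl i) = g i)
    (hG2 : ∀ i : Fin n, G (Sum.inr (i, true)) = C N + X i)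
    (hG3 : ∀ i : Fin n, G (Sum.inr (i, false)) = C N - X i)
    (P : Set (MvPolynomial (Fin n) ℝ))
    (hP : P = {p | ∃ (m : ℕ) (a : Fin m → ℝ)
        (e : Fin m → (Fin s ⊕ Fin n × Bool) → ℕ),
      (∀ i, 0 ≤ a i) ∧ p = ∑ i, C (a i) * ∏ k, G k ^ e i k})
    (M : Set (MvPolynomial (Fin n) ℝ))
    (hM : M = {p | ∃ (m : ℕ) (sj Hj : Fin m → MvPolynomial (Fin n) ℝ),
      (∀ j, ∃ d, IsSONC n d (sj j)) ∧
      (∀ j, ∃ e : (Fin s ⊕ Fin n × Bool) → ℕ, Hj j = ∏ k, G k ^ e k) ∧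
      p = ∑ j, sj j * Hj j}) :
    (1 : MvPolynomial (Fin n) ℝ) ∈ M ∧
    (∀ p q, p ∈ M → q ∈ M → p + q ∈ M) ∧
    (∀ p q, p ∈ P → q ∈ M → p * q ∈ M) ∧
    (∀ f : MvPolynomial (Fin n) ℝ, ∃ N' : ℕ, 1 ≤ N' ∧ C (N' : ℝ) - f ∈ M) := by
  classical
  subst hP hM
  set MM := {p : MvPolynomial (Fin n) ℝ | ∃ (m : ℕ) (sj Hj : Fin m → MvPolynomial (Fin n) ℝ),
      (∀ j, ∃ d, IsSONC n d (sj j)) ∧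
      (∀ j, ∃ e : (Fin s ⊕ Fin n × Bool) → ℕ, Hj j = ∏ k, G k ^ e k) ∧
      p = ∑ j, sj j * Hj j} with hMM
  have hsingle : ∀ s' H' : MvPolynomial (Fin n) ℝ, (∃ d, IsSONC n d s') →
      (∃ e : (Fin s ⊕ Fin n × Bool) → ℕ, H' = ∏ k, G k ^ e k) → s' * H' ∈ MM :=
    fun s' H' hs hH => ⟨1, fun _ => s', fun _ => H', fun _ => hs, fun _ => hH, by simp⟩
  have h0M : (0 : MvPolynomial (Fin n) ℝ) ∈ MM :=
    ⟨0, fun i => i.elim0, fun i => i.elim0, fun i => i.elim0, fun i => i.elim0, by simp⟩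
  have haddM : ∀ p q : MvPolynomial (Fin n) ℝ, p ∈ MM → q ∈ MM → p + q ∈ MM := by
    rintro p q ⟨m1, s1, H1, hs1, hH1, rfl⟩ ⟨m2, s2, H2, hs2, hH2, rfl⟩
    refine ⟨m1 + m2, Fin.addCases s1 s2, Fin.addCases H1 H2, ?_, ?_, ?_⟩
    · intro j
      induction j using Fin.addCases with
      | left i => simpa using hs1 i
      | right i => simpa using hs2 i
    · intro j
      induction j using Fin.addCases with
      | left i => simpa using hH1 i
      | right i => simpa using hH2 i
    · rw [Fin.sum_univ_add]
      simp
  have hsumM : ∀ {ι : Type} (t : Finset ι) (f : ι → MvPolynomial (Fin n) ℝ),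
      (∀ i ∈ t, f i ∈ MM) → ∑ i ∈ t, f i ∈ MM := by
    intro ι t f hf
    exact Finset.sum_induction f (· ∈ MM) haddM h0M hf
  have hconstM : ∀ t : ℝ, 0 ≤ t → (C t : MvPolynomial (Fin n) ℝ) ∈ MM := by
    intro t ht
    have := hsingle (C t) (∏ k, G k ^ ((0 : (Fin s ⊕ Fin n × Bool) → ℕ) k))
      ⟨0, sonc_const n t ht⟩ ⟨0, rfl⟩
    simpa using this
  have hmulPM : ∀ p q : MvPolynomial (Fin n) ℝ,
      (∃ (m : ℕ) (a : Fin m → ℝ) (e : Fin m → (Fin s ⊕ Fin n × Bool) → ℕ),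
        (∀ i, 0 ≤ a i) ∧ p = ∑ i, C (a i) * ∏ k, G k ^ e i k) → q ∈ MM → p * q ∈ MM := by
    rintro p q ⟨m, a, e, ha, rfl⟩ ⟨m', sj, Hj, hs, hH, rfl⟩
    rw [Finset.sum_mul]
    refine hsumM _ _ (fun i _ => ?_)
    rw [Finset.mul_sum]
    refine hsumM _ _ (fun j _ => ?_)
    obtain ⟨d, hd⟩ := hs j
    obtain ⟨e', he'⟩ := hH j
    rw [he']
    have heq : (C (a i) * ∏ k, G k ^ e i k) * (sj j * ∏ k, G k ^ e' k)
        = (C (a i) * sj j) * ∏ k, G k ^ (e i k + e' k) := by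
      simp only [pow_add, Finset.prod_mul_distrib]
      ring
    rw [heq]
    exact hsingle _ _ ⟨d, sonc_smul (ha i) hd⟩ ⟨_, rfl⟩
  have hprodG : ∀ k0, (∏ k, G k ^ (Pi.single k0 1 : (Fin s ⊕ Fin n × Bool) → ℕ) k) = G k0 := by
    intro k0
    rw [Finset.prod_eq_single k0 (fun b _ hb => by simp [Pi.single_eq_of_ne hb])
      (fun h => absurd (Finset.mem_univ k0) h)]
    simp
  have hPG : ∀ k0, ∃ (m : ℕ) (a : Fin m → ℝ) (e : Fin m → (Fin s ⊕ Fin n × Bool) → ℕ),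
      (∀ i, 0 ≤ a i) ∧ G k0 = ∑ i, C (a i) * ∏ k, G k ^ e i k := by
    intro k0
    exact ⟨1, fun _ => 1, fun _ => Pi.single k0 1, fun _ => zero_le_one, by simp [hprodG k0]⟩
  have hPconst : ∀ c : ℝ, 0 ≤ c → ∃ (m : ℕ) (a : Fin m → ℝ)
      (e : Fin m → (Fin s ⊕ Fin n × Bool) → ℕ),
      (∀ i, 0 ≤ a i) ∧ (C c : MvPolynomial (Fin n) ℝ) = ∑ i, C (a i) * ∏ k, G k ^ e i k := by
    intro c hc
    exact ⟨1, fun _ => c, fun _ => 0, fun _ => hc, by simp⟩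
  have harch : ∀ f : MvPolynomial (Fin n) ℝ, ∃ B : ℝ, (C B - f) ∈ MM ∧ (C B + f) ∈ MM := by
    intro f
    induction f using MvPolynomial.induction_on with
    | C c =>
      refine ⟨|c|, ?_, ?_⟩
      · rw [← C_sub]; exact hconstM _ (by have := le_abs_self c; linarith)
      · rw [← C_add]; exact hconstM _ (by have := neg_abs_le c; linarith)
    | add p q hp hq =>
      obtain ⟨B1, h1, h1'⟩ := hp
      obtain ⟨B2, h2, h2'⟩ := hq
      refine ⟨B1 + B2, ?_, ?_⟩
      · have heq : C (B1 + B2) - (p + q) = (C B1 - p) + (C B2 - q) := by rw [C_add]; ring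
        rw [heq]; exact haddM _ _ h1 h2
      · have heq : C (B1 + B2) + (p + q) = (C B1 + p) + (C B2 + q) := by rw [C_add]; ring
        rw [heq]; exact haddM _ _ h1' h2'
    | mul_X p i hp =>
      obtain ⟨B, h1, h2⟩ := hp
      have hNXp : ∃ (m : ℕ) (a : Fin m → ℝ) (e : Fin m → (Fin s ⊕ Fin n × Bool) → ℕ),
          (∀ i, 0 ≤ a i) ∧ (C N - X i : MvPolynomial (Fin n) ℝ)
            = ∑ i, C (a i) * ∏ k, G k ^ e i k := by
        rw [← hG3 i]; exact hPG _
      have hNXm : ∃ (m : ℕ) (a : Fin m → ℝ) (e : Fin m → (Fin s ⊕ Fin n × Bool) → ℕ),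
          (∀ i, 0 ≤ a i) ∧ (C N + X i : MvPolynomial (Fin n) ℝ)
            = ∑ i, C (a i) * ∏ k, G k ^ e i k := by
        rw [← hG2 i]; exact hPG _
      have c2 : (C (2:ℝ) : MvPolynomial (Fin n) ℝ) = 2 := by
        simp [map_ofNat]
      have hhalf : ∀ t : MvPolynomial (Fin n) ℝ, C (2:ℝ) * t ∈ MM → t ∈ MM := by
        intro t ht
        have h12 := hmulPM (C (1/2 : ℝ)) (C (2:ℝ) * t) (hPconst _ (by norm_num)) ht
        have heq : C (1/2 : ℝ) * (C (2:ℝ) * t) = t := by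
          rw [← mul_assoc, ← C_mul]; norm_num
        rwa [heq] at h12
      refine ⟨N * B, ?_, ?_⟩
      · apply hhalf
        have e1 : C (2:ℝ) * (C (N * B) - p * X i)
            = (C N - X i) * (C B + p) + (C N + X i) * (C B - p) := by
          rw [c2, C_mul]; ring
        rw [e1]
        exact haddM _ _ (hmulPM _ _ hNXp h2) (hmulPM _ _ hNXm h1)
      · apply hhalf
        have e1 : C (2:ℝ) * (C (N * B) + p * X i)
            = (C N - X i) * (C B - p) + (C N + X i) * (C B + p) := by
          rw [c2, C_mul]; ring
        rw [e1]
        exact haddM _ _ (hmulPM _ _ hNXp h1) (hmulPM _ _ hNXm h2)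
  refine ⟨?_, haddM, hmulPM, ?_⟩
  · simpa using hconstM 1 zero_le_one
  · intro f
    obtain ⟨B, hB, -⟩ := harch f
    refine ⟨max 1 ⌈B⌉₊, le_max_left _ _, ?_⟩
    have hBle : B ≤ ((max 1 ⌈B⌉₊ : ℕ) : ℝ) := by
      calc B ≤ (⌈B⌉₊ : ℝ) := Nat.le_ceil B
        _ ≤ ((max 1 ⌈B⌉₊ : ℕ) : ℝ) := by exact_mod_cast le_max_right 1 ⌈B⌉₊
    have heq : (C ((max 1 ⌈B⌉₊ : ℕ) : ℝ) : MvPolynomial (Fin n) ℝ) - f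
        = (C B - f) + C (((max 1 ⌈B⌉₊ : ℕ) : ℝ) - B) := by
      rw [C_sub]; ring
    rw [heq]
    exact haddM _ _ hB (hconstM _ (by linarith))
end

section
/- Let f be a polynomial supported on a finite set A ⊂ ℕ^n with Newton polytope conv(A). If f is nonnegative on ℝ^n, then every vertex α of conv(A) lies in (2ℕ)^n and the corresponding coefficient f_α is strictly positive. -/
/-!
Let `α` be a vertex of the Newton polytope of `f`. A linear functional `w` separating `α` from the
other exponents makes `α` the unique exponent of maximal weight, so along the curve
`x(t) = (s i * exp (t * w i))ᵢ` the value `exp (-t ⟪w, α⟫) * f (x t)` tends to `f_α * sᵅ` as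
`t → ∞`. Nonnegativity of `f` then gives `0 ≤ f_α * sᵅ` for every `s`: taking `s = 1`
shows `f_α > 0`, and flipping one sign shows each `αᵢ` is even.
-/

open MvPolynomial Filter Topology

theorem exists_dual_lt_of_mem_extremePoints_convexHull {E : Type*} [AddCommGroup E] [Module ℝ E]
    [TopologicalSpace E] [IsTopologicalAddGroup E] [ContinuousSMul ℝ E] [LocallyConvexSpace ℝ E]
    [T2Space E] {s : Set E} (hs : s.Finite) {x : E}
    (hx : x ∈ (convexHull ℝ s).extremePoints ℝ) :
    ∃ φ : StrongDual ℝ E, ∀ y ∈ s, y ≠ x → φ y < φ x := by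
  have hx' : x ∉ convexHull ℝ (s \ {x}) := fun hmem =>
    ((convex_convexHull ℝ s).mem_extremePoints_iff_mem_sdiff_convexHull_sdiff.mp hx).2
      (convexHull_mono (Set.sdiff_subset_sdiff_left (subset_convexHull ℝ s)) hmem)
  obtain ⟨φ, u, hlt, hu⟩ := geometric_hahn_banach_closed_point (convex_convexHull ℝ _)
    (hs.sdiff.isClosed_convexHull ℝ) hx'
  exact ⟨φ, fun y hy hyx => (hlt y (subset_convexHull ℝ _ ⟨hy, hyx⟩)).trans hu⟩

theorem prod_mul_exp_pow {σ : Type*} [Fintype σ] (s w : σ → ℝ) (t : ℝ) (β : σ →₀ ℕ) :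
    ∏ i, (s i * Real.exp (t * w i)) ^ β i
      = (∏ i, s i ^ β i) * Real.exp (t * ∑ i, β i * w i) := by
  rw [Finset.mul_sum, Real.exp_sum, ← Finset.prod_mul_distrib]
  refine Finset.prod_congr rfl fun i _ => ?_
  rw [mul_pow, ← Real.exp_nat_mul]
  ring_nf

namespace MvPolynomial

variable {σ : Type*} [Fintype σ]

theorem tendsto_exp_mul_eval_of_weight_lt (f : MvPolynomial σ ℝ) (w : σ → ℝ) {α : σ →₀ ℕ}
    (hα : ∀ β ∈ f.support, β ≠ α → ∑ i, β i * w i < ∑ i, α i * w i) (s : σ → ℝ) :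
    Tendsto (fun t => Real.exp (-(t * ∑ i, α i * w i)) * eval (fun i => s i * Real.exp (t * w i)) f)
      atTop (𝓝 (f.coeff α * ∏ i, s i ^ α i)) := by
  classical
  have hlim : f.coeff α * ∏ i, s i ^ α i
      = ∑ β ∈ f.support, if β = α then f.coeff β * ∏ i, s i ^ β i else 0 := by
    rw [Finset.sum_ite_eq']
    split_ifs with h
    · rfl
    · rw [notMem_support_iff.mp h, zero_mul]
  rw [hlim]
  refine (tendsto_finsetSum f.support (f := fun β t => f.coeff β * (∏ i, s i ^ β i) *
    Real.exp (t * (∑ i, β i * w i - ∑ i, α i * w i))) fun β hβ => ?_).congr fun t => ?_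
  · split_ifs with hβα
    · simp [hβα]
    · have hexp : Tendsto (fun t : ℝ => Real.exp (t * (∑ i, β i * w i - ∑ i, α i * w i)))
          atTop (𝓝 0) :=
        Real.tendsto_exp_atBot.comp <|
          (tendsto_mul_const_atBot_of_neg (sub_neg.mpr (hα β hβ hβα))).mpr tendsto_id
      simpa using hexp.const_mul (f.coeff β * ∏ i, s i ^ β i)
  · rw [eval_eq', Finset.mul_sum]
    refine Finset.sum_congr rfl fun β _ => ?_
    rw [prod_mul_exp_pow, mul_sub, sub_eq_add_neg, Real.exp_add]
    ring

theorem coeff_mul_prod_pow_nonneg_of_weight_lt {f : MvPolynomial σ ℝ}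
    (hf : ∀ x, 0 ≤ eval x f) (w : σ → ℝ) {α : σ →₀ ℕ}
    (hα : ∀ β ∈ f.support, β ≠ α → ∑ i, β i * w i < ∑ i, α i * w i) (s : σ → ℝ) :
    0 ≤ f.coeff α * ∏ i, s i ^ α i :=
  ge_of_tendsto' (f.tendsto_exp_mul_eval_of_weight_lt w hα s) fun _ =>
    mul_nonneg (Real.exp_nonneg _) (hf _)

end MvPolynomial

/-- For a globally nonnegative polynomial, every vertex (extreme point) of
its Newton polytope is an even lattice point carrying a strictly positive coefficient. -/
theorem newton_polytope_vertices_of_nonneg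
    (n : ℕ) (f : MvPolynomial (Fin n) ℝ)
    (hnn : ∀ x : Fin n → ℝ, 0 ≤ eval x f)
    (α : Fin n →₀ ℕ) (hα : α ∈ f.support)
    (hvert : (fun i => (α i : ℝ)) ∈ Set.extremePoints ℝ
      (convexHull ℝ ((fun (a : Fin n →₀ ℕ) => fun i => (a i : ℝ)) '' ↑f.support))) :
    (∀ i, Even (α i)) ∧ 0 < f.coeff α := by
  obtain ⟨φ, hφ⟩ := exists_dual_lt_of_mem_extremePoints_convexHull
    (f.support.finite_toSet.image _) hvert
  set w : Fin n → ℝ := fun i => φ fun j => if i = j then 1 else 0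
  have hφw : ∀ v, φ v = ∑ i, v i * w i := fun v => by
    simpa using LinearMap.pi_apply_eq_sum_univ φ.toLinearMap v
  have hweight : ∀ β ∈ f.support, β ≠ α → ∑ i, β i * w i < ∑ i, α i * w i := by
    intro β hβ hβα
    have hne : (fun i => (β i : ℝ)) ≠ fun i => (α i : ℝ) := fun h =>
      hβα <| Finsupp.ext fun i => Nat.cast_injective (congrFun h i)
    simpa only [hφw] using hφ _ ⟨β, hβ, rfl⟩ hne
  have hsign := coeff_mul_prod_pow_nonneg_of_weight_lt hnn _ hweight
  have hpos : 0 < f.coeff α := by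
    have h1 := hsign 1
    simp only [Pi.one_apply, one_pow, Finset.prod_const_one, mul_one] at h1
    exact h1.lt_of_ne' (mem_support_iff.mp hα)
  refine ⟨fun i => ?_, hpos⟩
  have hflip := hsign (Function.update 1 i (-1))
  rw [Fintype.prod_eq_single i fun j hj => by simp [hj], Function.update_self] at hflip
  rcases Nat.even_or_odd (α i) with heven | hodd
  · exact heven
  · rw [hodd.neg_one_pow] at hflip
    linarith
end
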